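/- Let a, b, p ∈ ℂ and let c be the braiding of type R_{1,1} on V = ℂ³ with parameters t = −1, a, b, p. Then the kernel of id_{V⊗V} + c is exactly the 6-dimensional subspace of V ⊗ V spanned by the six linearly independent elements: x₂⊗x₁ + x₁⊗x₂; x₃⊗x₁ + x₁⊗x₃; x₃⊗x₂ + x₂⊗x₃ − b x₁⊗x₂; x₁⊗x₁; x₂⊗x₂; x₃⊗x₃ − b x₁⊗x₃ + p x₁⊗x₂. -/

import Mathlib

/-!
The six vectors are killed by `id + c` by direct computation, and they are linearly independent
because their coordinates at `x₂⊗x₁, x₃⊗x₁, x₃⊗x₂, x₁⊗x₁, x₂⊗x₂, x₃⊗x₃` form the identity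
matrix. Conversely, the coordinates at `x₂⊗x₁, x₃⊗x₁, x₃⊗x₂` of the images of
`x₂⊗x₁, x₃⊗x₁, x₃⊗x₂ - t a x₂⊗x₁` also form the identity matrix, so `id + c` has rank at
least 3 and its kernel has dimension at most `9 - 3 = 6`.
-/

open TensorProduct

/-- `V = ℂ³`. -/
abbrev V3 : Type := Fin 3 → ℂ

/-- The standard basis vectors `x₁ = xv 0`, `x₂ = xv 1`, `x₃ = xv 2` of `ℂ³`. -/
noncomputable def xv (i : Fin 3) : V3 := Pi.single i 1

open Module

theorem LinearMap.ker_eq_span_of_linearIndependent {K M N ι κ : Type*} [Field K]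
    [AddCommGroup M] [Module K M] [FiniteDimensional K M] [AddCommGroup N] [Module K N]
    [Fintype ι] [Fintype κ] (f : M →ₗ[K] N) {v : ι → M} {w : κ → M}
    (hv : LinearIndependent K v) (hw : LinearIndependent K (f ∘ w))
    (hker : ∀ i, v i ∈ LinearMap.ker f) (hdim : finrank K M ≤ Fintype.card ι + Fintype.card κ) :
    LinearMap.ker f = Submodule.span K (Set.range v) := by
  have hle : Submodule.span K (Set.range v) ≤ LinearMap.ker f :=
    Submodule.span_le.2 <| Set.range_subset_iff.2 hker
  have hrange : Fintype.card κ ≤ finrank K (LinearMap.range f) := by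
    have hspan : Submodule.span K (Set.range (f ∘ w)) ≤ LinearMap.range f :=
      Submodule.span_le.2 <| Set.range_subset_iff.2 fun k => LinearMap.mem_range_self f (w k)
    simpa only [finrank_span_eq_card hw] using Submodule.finrank_mono hspan
  have hrank := LinearMap.finrank_range_add_finrank_ker f
  refine (Submodule.eq_of_le_of_finrank_le hle ?_).symm
  rw [finrank_span_eq_card hv]
  omega

-- The field `apply_ij` is the value of `c` on `xᵢ ⊗ xⱼ`, where `xᵢ = xv (i - 1)`.
structure IsR11Braiding (t a b p : ℂ) (c : V3 ⊗[ℂ] V3 →ₗ[ℂ] V3 ⊗[ℂ] V3) : Prop where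
  apply_11 : c (xv 0 ⊗ₜ[ℂ] xv 0) = t • (xv 0 ⊗ₜ[ℂ] xv 0)
  apply_21 : c (xv 1 ⊗ₜ[ℂ] xv 0) = t • (xv 0 ⊗ₜ[ℂ] xv 1)
  apply_31 : c (xv 2 ⊗ₜ[ℂ] xv 0) = t • (xv 0 ⊗ₜ[ℂ] xv 2) + (t * a) • (xv 0 ⊗ₜ[ℂ] xv 0)
  apply_12 : c (xv 0 ⊗ₜ[ℂ] xv 1) = t • (xv 1 ⊗ₜ[ℂ] xv 0)
  apply_22 : c (xv 1 ⊗ₜ[ℂ] xv 1) = t • (xv 1 ⊗ₜ[ℂ] xv 1)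
  apply_32 : c (xv 2 ⊗ₜ[ℂ] xv 1) = t • (xv 1 ⊗ₜ[ℂ] xv 2)
      + (t * a) • (xv 1 ⊗ₜ[ℂ] xv 0) + (t * (a - b)) • (xv 0 ⊗ₜ[ℂ] xv 1)
  apply_13 : c (xv 0 ⊗ₜ[ℂ] xv 2) = t • (xv 2 ⊗ₜ[ℂ] xv 0) - (t * a) • (xv 0 ⊗ₜ[ℂ] xv 0)
  apply_23 : c (xv 1 ⊗ₜ[ℂ] xv 2) = t • (xv 2 ⊗ₜ[ℂ] xv 1)
      + (t * (b - a)) • (xv 1 ⊗ₜ[ℂ] xv 0) - (t * a) • (xv 0 ⊗ₜ[ℂ] xv 1)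
  apply_33 : c (xv 2 ⊗ₜ[ℂ] xv 2) = t • (xv 2 ⊗ₜ[ℂ] xv 2)
      + (t * b) • (xv 2 ⊗ₜ[ℂ] xv 0) - (t * p) • (xv 1 ⊗ₜ[ℂ] xv 0)
      - (t * b) • (xv 0 ⊗ₜ[ℂ] xv 2) + (t * p) • (xv 0 ⊗ₜ[ℂ] xv 1)
      - (t * a * b) • (xv 0 ⊗ₜ[ℂ] xv 0)

noncomputable def tensorCoord (i j : Fin 3) : Dual ℂ (V3 ⊗[ℂ] V3) :=
  ((Pi.basisFun ℂ (Fin 3)).tensorProduct (Pi.basisFun ℂ (Fin 3))).coord (i, j)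

@[simp]
theorem tensorCoord_tmul_xv (i j k l : Fin 3) :
    tensorCoord i j (xv k ⊗ₜ[ℂ] xv l) = if i = k ∧ j = l then 1 else 0 := by
  simp [tensorCoord, xv, Pi.single_apply, ite_and]

noncomputable def r11KerFamily (b p : ℂ) : Fin 6 → V3 ⊗[ℂ] V3 :=
  ![xv 1 ⊗ₜ[ℂ] xv 0 + xv 0 ⊗ₜ[ℂ] xv 1,
    xv 2 ⊗ₜ[ℂ] xv 0 + xv 0 ⊗ₜ[ℂ] xv 2,
    xv 2 ⊗ₜ[ℂ] xv 1 + xv 1 ⊗ₜ[ℂ] xv 2 - b • (xv 0 ⊗ₜ[ℂ] xv 1),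
    xv 0 ⊗ₜ[ℂ] xv 0,
    xv 1 ⊗ₜ[ℂ] xv 1,
    xv 2 ⊗ₜ[ℂ] xv 2 - b • (xv 0 ⊗ₜ[ℂ] xv 2) + p • (xv 0 ⊗ₜ[ℂ] xv 1)]

theorem linearIndependent_r11KerFamily (b p : ℂ) : LinearIndependent ℂ (r11KerFamily b p) := by
  let pos : Fin 6 → Fin 3 × Fin 3 := ![(1, 0), (2, 0), (2, 1), (0, 0), (1, 1), (2, 2)]
  refine .of_pairwise_dual_eq_zero_one _ (fun k => tensorCoord (pos k).1 (pos k).2) ?_ ?_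
  · intro i j hij
    fin_cases i <;> fin_cases j <;> simp_all [r11KerFamily, pos]
  · intro i
    fin_cases i <;> simp [r11KerFamily, pos]

namespace IsR11Braiding

variable {t a b p : ℂ} {c : V3 ⊗[ℂ] V3 →ₗ[ℂ] V3 ⊗[ℂ] V3}

theorem mem_ker_id_add_r11KerFamily (hc : IsR11Braiding (-1) a b p c) (k : Fin 6) :
    r11KerFamily b p k ∈ LinearMap.ker (LinearMap.id + c) := by
  fin_cases k <;>
    simp only [r11KerFamily, Fin.reduceFinMk, Matrix.cons_val, LinearMap.mem_ker,
      LinearMap.add_apply, LinearMap.id_apply, map_add, map_sub, map_smul, hc.apply_11,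
      hc.apply_21, hc.apply_31, hc.apply_12, hc.apply_22, hc.apply_32, hc.apply_13,
      hc.apply_23, hc.apply_33] <;>
    module

-- The correction `- t a x₂⊗x₁` cancels the `x₂⊗x₁`-coordinate of `(id + c) (x₃⊗x₂)`.
theorem linearIndependent_id_add_comp (hc : IsR11Braiding t a b p c) :
    LinearIndependent ℂ ((LinearMap.id + c : End ℂ (V3 ⊗[ℂ] V3)) ∘
      ![xv 1 ⊗ₜ[ℂ] xv 0, xv 2 ⊗ₜ[ℂ] xv 0, xv 2 ⊗ₜ[ℂ] xv 1 - (t * a) • (xv 1 ⊗ₜ[ℂ] xv 0)]) := by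
  let pos : Fin 3 → Fin 3 × Fin 3 := ![(1, 0), (2, 0), (2, 1)]
  refine .of_pairwise_dual_eq_zero_one _ (fun k => tensorCoord (pos k).1 (pos k).2) ?_ ?_
  · intro i j hij
    fin_cases i <;> fin_cases j <;>
      simp_all [pos, hc.apply_21, hc.apply_31, hc.apply_32]
  · intro i
    fin_cases i <;> simp [pos, hc.apply_21, hc.apply_31, hc.apply_32]

end IsR11Braiding

theorem ker_id_add_c_R11_t_neg_one (a b p : ℂ)
    (c : V3 ⊗[ℂ] V3 →ₗ[ℂ] V3 ⊗[ℂ] V3)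
    (h11 : c (xv 0 ⊗ₜ[ℂ] xv 0) = (-1 : ℂ) • (xv 0 ⊗ₜ[ℂ] xv 0))
    (h21 : c (xv 1 ⊗ₜ[ℂ] xv 0) = (-1 : ℂ) • (xv 0 ⊗ₜ[ℂ] xv 1))
    (h31 : c (xv 2 ⊗ₜ[ℂ] xv 0) = (-1 : ℂ) • (xv 0 ⊗ₜ[ℂ] xv 2)
      + ((-1 : ℂ) * a) • (xv 0 ⊗ₜ[ℂ] xv 0))
    (h12 : c (xv 0 ⊗ₜ[ℂ] xv 1) = (-1 : ℂ) • (xv 1 ⊗ₜ[ℂ] xv 0))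
    (h22 : c (xv 1 ⊗ₜ[ℂ] xv 1) = (-1 : ℂ) • (xv 1 ⊗ₜ[ℂ] xv 1))
    (h32 : c (xv 2 ⊗ₜ[ℂ] xv 1) = (-1 : ℂ) • (xv 1 ⊗ₜ[ℂ] xv 2)
      + ((-1 : ℂ) * a) • (xv 1 ⊗ₜ[ℂ] xv 0) + ((-1 : ℂ) * (a - b)) • (xv 0 ⊗ₜ[ℂ] xv 1))
    (h13 : c (xv 0 ⊗ₜ[ℂ] xv 2) = (-1 : ℂ) • (xv 2 ⊗ₜ[ℂ] xv 0)
      - ((-1 : ℂ) * a) • (xv 0 ⊗ₜ[ℂ] xv 0))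
    (h23 : c (xv 1 ⊗ₜ[ℂ] xv 2) = (-1 : ℂ) • (xv 2 ⊗ₜ[ℂ] xv 1)
      + ((-1 : ℂ) * (b - a)) • (xv 1 ⊗ₜ[ℂ] xv 0) - ((-1 : ℂ) * a) • (xv 0 ⊗ₜ[ℂ] xv 1))
    (h33 : c (xv 2 ⊗ₜ[ℂ] xv 2) = (-1 : ℂ) • (xv 2 ⊗ₜ[ℂ] xv 2)
      + ((-1 : ℂ) * b) • (xv 2 ⊗ₜ[ℂ] xv 0) - ((-1 : ℂ) * p) • (xv 1 ⊗ₜ[ℂ] xv 0)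
      - ((-1 : ℂ) * b) • (xv 0 ⊗ₜ[ℂ] xv 2) + ((-1 : ℂ) * p) • (xv 0 ⊗ₜ[ℂ] xv 1)
      - ((-1 : ℂ) * a * b) • (xv 0 ⊗ₜ[ℂ] xv 0)) :
    LinearIndependent ℂ
      (![xv 1 ⊗ₜ[ℂ] xv 0 + xv 0 ⊗ₜ[ℂ] xv 1,
         xv 2 ⊗ₜ[ℂ] xv 0 + xv 0 ⊗ₜ[ℂ] xv 2,
         xv 2 ⊗ₜ[ℂ] xv 1 + xv 1 ⊗ₜ[ℂ] xv 2 - b • (xv 0 ⊗ₜ[ℂ] xv 1),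
         xv 0 ⊗ₜ[ℂ] xv 0,
         xv 1 ⊗ₜ[ℂ] xv 1,
         xv 2 ⊗ₜ[ℂ] xv 2 - b • (xv 0 ⊗ₜ[ℂ] xv 2) + p • (xv 0 ⊗ₜ[ℂ] xv 1)] :
        Fin 6 → V3 ⊗[ℂ] V3) ∧
    LinearMap.ker (LinearMap.id + c) = Submodule.span ℂ
      (Set.range (![xv 1 ⊗ₜ[ℂ] xv 0 + xv 0 ⊗ₜ[ℂ] xv 1,
         xv 2 ⊗ₜ[ℂ] xv 0 + xv 0 ⊗ₜ[ℂ] xv 2,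
         xv 2 ⊗ₜ[ℂ] xv 1 + xv 1 ⊗ₜ[ℂ] xv 2 - b • (xv 0 ⊗ₜ[ℂ] xv 1),
         xv 0 ⊗ₜ[ℂ] xv 0,
         xv 1 ⊗ₜ[ℂ] xv 1,
         xv 2 ⊗ₜ[ℂ] xv 2 - b • (xv 0 ⊗ₜ[ℂ] xv 2) + p • (xv 0 ⊗ₜ[ℂ] xv 1)] :
        Fin 6 → V3 ⊗[ℂ] V3)) := by
  have hc : IsR11Braiding (-1) a b p c := ⟨h11, h21, h31, h12, h22, h32, h13, h23, h33⟩
  refine ⟨linearIndependent_r11KerFamily b p, ?_⟩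
  refine LinearMap.ker_eq_span_of_linearIndependent _ (linearIndependent_r11KerFamily b p)
    hc.linearIndependent_id_add_comp hc.mem_ker_id_add_r11KerFamily ?_
  simp [finrank_tensorProduct]
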